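/- In the setting of two likelihood-ratio experiments f_h, f_l on [a_h,b_h], [a_l,b_l] (0 ≤ a_h < a_l < b_l < b_h ≤ ∞) satisfying the hazard-rate and reverse-hazard-rate dominance conditions, fix p ∈ (0,1) and μ = 1/2, suppose β†_1 < β†_0, and let β* be the unique solution of the indifference equation. Write A_s = F_{h,s}(1) and B_s = F_{l,s}(1) (the CDFs evaluated at likelihood ratio 1), and define G₁ = (1−A₁)/(p(1−A₁)+(1−p)(1−B₁)) − A₁/(pA₁+(1−p)B₁) and G₀ = A₀/(pA₀+(1−p)B₀) − (1−A₀)/(p(1−A₀)+(1−p)(1−B₀)). Then: β* > 1/2 if G₁ < G₀; β* = 1/2 if G₁ = G₀; and β* < 1/2 if G₁ > G₀. -/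

import Mathlib

open MeasureTheory Set

/-- State-0 CDF of a likelihood-ratio experiment. -/
noncomputable def F0 (f : ℝ → ℝ) (ℓ : ℝ) : ℝ := ∫ u in (0:ℝ)..ℓ, f u

/-- State-1 CDF of a likelihood-ratio experiment. -/
noncomputable def F1 (f : ℝ → ℝ) (ℓ : ℝ) : ℝ := ∫ u in (0:ℝ)..ℓ, u * f u

/-- State-`s` CDF, `s ∈ {0,1}`. -/
noncomputable def Fs (f : ℝ → ℝ) (s : Fin 2) (ℓ : ℝ) : ℝ :=
  if s = 0 then F0 f ℓ else F1 f ℓ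

/-- State-`s` density, `s ∈ {0,1}`: `f` in state 0 and `ℓ·f(ℓ)` in state 1. -/
noncomputable def fs (f : ℝ → ℝ) (s : Fin 2) (ℓ : ℝ) : ℝ :=
  if s = 0 then f ℓ else ℓ * f ℓ

/-- A likelihood-ratio experiment on `[a, b]` with `0 ≤ a < b ≤ ∞`. -/
structure IsLRExperiment (f : ℝ → ℝ) (a : ℝ) (b : EReal) : Prop where
  a_nonneg : 0 ≤ a
  a_lt_b : (a : EReal) < b
  cont : Continuous f
  pos : ∀ ℓ : ℝ, a < ℓ → (ℓ : EReal) < b → 0 < f ℓ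
  zero_outside : ∀ ℓ : ℝ, (ℓ < a ∨ b < (ℓ : EReal)) → f ℓ = 0
  int_one : (∫ ℓ in Ioi (0:ℝ), f ℓ) = 1
  int_mean : (∫ ℓ in Ioi (0:ℝ), ℓ * f ℓ) = 1

/-- The low type's experiment is noisier: reverse-hazard-rate and hazard-rate dominance
in each state on the interior of the low type's support. -/
def Noisier (fh fl : ℝ → ℝ) (a_l b_l : ℝ) : Prop :=
  ∀ s : Fin 2, ∀ ℓ : ℝ, a_l < ℓ → ℓ < b_l →
    fs fl s ℓ / Fs fl s ℓ > fs fh s ℓ / Fs fh s ℓ ∧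
    fs fl s ℓ / (1 - Fs fl s ℓ) > fs fh s ℓ / (1 - Fs fh s ℓ)

/-- Likelihood-ratio cutoff corresponding to belief `β` under prior `μ`. -/
noncomputable def zOf (μ β : ℝ) : ℝ := (1 - μ) * β / (μ * (1 - β))

/-- Distribution of the posterior state belief conditional on state `s`. -/
noncomputable def H (f : ℝ → ℝ) (μ : ℝ) (s : Fin 2) (β : ℝ) : ℝ :=
  Fs f s (zOf μ β)

/-- Posterior belief induced by likelihood ratio `x` under prior `μ`. -/
noncomputable def betaOf (μ x : ℝ) : ℝ := μ * x / (μ * x + 1 - μ)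

/-- `βd` is the crossing belief in state `s`: it lies in `(β̲_l, β̄_l)` and
`H_{h,s} − H_{l,s}` is positive below it, zero at it, and negative above it on the high
type's belief range (expressed via `betaOf μ a_h < β`, `β < 1`, `z(β) < b_h`). -/
def IsCrossingBelief (fh fl : ℝ → ℝ) (a_h a_l b_l : ℝ) (b_h : EReal)
    (μ : ℝ) (s : Fin 2) (βd : ℝ) : Prop :=
  βd ∈ Set.Ioo (betaOf μ a_l) (betaOf μ b_l) ∧
  ∀ β : ℝ, betaOf μ a_h < β → β < 1 → ((zOf μ β : ℝ) : EReal) < b_h →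
    ((β < βd → H fh μ s β - H fl μ s β > 0) ∧
     (β = βd → H fh μ s β - H fl μ s β = 0) ∧
     (βd < β → H fh μ s β - H fl μ s β < 0))

/-- Left side of the indifference equation: the sender's expected reputational gain from
report 1 over report 0, at state belief `β`, when the market conjectures the `β`-cutoff
strategy profile. -/
noncomputable def indiffLHS (fh fl : ℝ → ℝ) (μ p β : ℝ) : ℝ :=
  β * ((1 - H fh μ 1 β) / (p * (1 - H fh μ 1 β) + (1 - p) * (1 - H fl μ 1 β))
      - H fh μ 1 β / (p * H fh μ 1 β + (1 - p) * H fl μ 1 β))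

/-- Right side of the indifference equation. -/
noncomputable def indiffRHS (fh fl : ℝ → ℝ) (μ p β : ℝ) : ℝ :=
  (1 - β) * (H fh μ 0 β / (p * H fh μ 0 β + (1 - p) * H fl μ 0 β)
      - (1 - H fh μ 0 β) / (p * (1 - H fh μ 0 β) + (1 - p) * (1 - H fl μ 0 β)))

/-- Expected reputational gain from report 1 under truthful reporting at belief 1/2:
`G₁ = (1−A₁)/(p(1−A₁)+(1−p)(1−B₁)) − A₁/(pA₁+(1−p)B₁)` with `A₁ = F_{h,1}(1)`,
`B₁ = F_{l,1}(1)`. -/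
noncomputable def Grep1 (fh fl : ℝ → ℝ) (p : ℝ) : ℝ :=
  (1 - F1 fh 1) / (p * (1 - F1 fh 1) + (1 - p) * (1 - F1 fl 1))
    - F1 fh 1 / (p * F1 fh 1 + (1 - p) * F1 fl 1)

/-- Expected reputational gain from report 0 under truthful reporting at belief 1/2:
`G₀ = A₀/(pA₀+(1−p)B₀) − (1−A₀)/(p(1−A₀)+(1−p)(1−B₀))` with `A₀ = F_{h,0}(1)`,
`B₀ = F_{l,0}(1)`. -/
noncomputable def Grep0 (fh fl : ℝ → ℝ) (p : ℝ) : ℝ :=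
  F0 fh 1 / (p * F0 fh 1 + (1 - p) * F0 fl 1)
    - (1 - F0 fh 1) / (p * (1 - F0 fh 1) + (1 - p) * (1 - F0 fl 1))


/-!
Write `Δ(β) = LHS − RHS` as `β·g₁(β) + (1 − β)·g₀(β)`, where `g_s(β)` is the reputational gain
of report 1 over report 0 computed from the state-`s` CDFs at the cutoff `z(β)`. Hazard-rate
dominance makes the posterior ratio after report 1 rise with `β` and reverse-hazard-rate
dominance makes the one after report 0 fall, so each `g_s` is strictly increasing on the low
type's belief range.
The crossing beliefs give `g₁ > 0` and `g₀ < 0` on `(β†₁, β†₀)`, hence `Δ` is strictly increasing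
there and `β*` is its only zero. At `β = 1/2` the cutoff is `z = 1` and `Δ(1/2) = (G₁ − G₀)/2`,
so the sign of `G₁ − G₀` places `1/2` relative to `β*`; when `1/2` lies outside `(β†₁, β†₀)`,
the crossing property alone fixes the sign of `Δ(1/2)`.
-/

/-- Posterior probability of the high type divided by its prior `p`, after an event of
probability `A` under the high type and `B` under the low type. -/
noncomputable def posteriorRatio (p A B : ℝ) : ℝ := A / (p * A + (1 - p) * B)

/-- Reputational gain of report 1 over report 0 when report 0 is sent with probability `A` by
the high type and `B` by the low type. -/
noncomputable def reportGain (p A B : ℝ) : ℝ :=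
  posteriorRatio p (1 - A) (1 - B) - posteriorRatio p A B

section ReportGain

variable {p A B : ℝ}

theorem reportGain_eq (h₁ : p * (1 - A) + (1 - p) * (1 - B) ≠ 0)
    (h₀ : p * A + (1 - p) * B ≠ 0) :
    reportGain p A B =
      (1 - p) * (B - A) / ((p * (1 - A) + (1 - p) * (1 - B)) * (p * A + (1 - p) * B)) := by
  unfold reportGain posteriorRatio
  rw [div_sub_div _ _ h₁ h₀]
  ring

theorem reportGain_pos_iff (hp : 0 ≤ p) (hp1 : p < 1) (hA : A ∈ Ioo 0 1) (hB : B ∈ Ioo 0 1) :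
    0 < reportGain p A B ↔ A < B := by
  obtain ⟨hA0, hA1⟩ := hA
  obtain ⟨hB0, hB1⟩ := hB
  have h₁ : 0 < p * (1 - A) + (1 - p) * (1 - B) := by nlinarith
  have h₀ : 0 < p * A + (1 - p) * B := by nlinarith
  rw [reportGain_eq h₁.ne' h₀.ne', div_pos_iff_of_pos_right (mul_pos h₁ h₀),
    mul_pos_iff_of_pos_left (sub_pos.2 hp1), sub_pos]

theorem reportGain_neg_iff (hp : 0 ≤ p) (hp1 : p < 1) (hA : A ∈ Ioo 0 1) (hB : B ∈ Ioo 0 1) :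
    reportGain p A B < 0 ↔ B < A := by
  obtain ⟨hA0, hA1⟩ := hA
  obtain ⟨hB0, hB1⟩ := hB
  have h₁ : 0 < p * (1 - A) + (1 - p) * (1 - B) := by nlinarith
  have h₀ : 0 < p * A + (1 - p) * B := by nlinarith
  rw [reportGain_eq h₁.ne' h₀.ne', div_lt_iff₀ (mul_pos h₁ h₀), zero_mul]
  constructor <;> intro h <;> nlinarith

theorem HasDerivAt.posteriorRatio {F G : ℝ → ℝ} {f g x : ℝ} (hF : HasDerivAt F f x)
    (hG : HasDerivAt G g x) (hD : p * F x + (1 - p) * G x ≠ 0) :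
    HasDerivAt (fun y => posteriorRatio p (F y) (G y))
      ((1 - p) * (f * G x - F x * g) / (p * F x + (1 - p) * G x) ^ 2) x :=
  (hF.div ((hF.const_mul p).add (hG.const_mul (1 - p))) hD).congr_deriv (by
    simp only [Pi.add_apply]; ring)

theorem strictMonoOn_reportGain {D : Set ℝ} (hD : Convex ℝ D) {F G f g : ℝ → ℝ}
    (hp : 0 ≤ p) (hp1 : p < 1)
    (hF : ∀ x ∈ D, HasDerivAt F (f x) x) (hG : ∀ x ∈ D, HasDerivAt G (g x) x)
    (hF01 : ∀ x ∈ D, F x ∈ Ioo 0 1) (hG01 : ∀ x ∈ D, G x ∈ Ioo 0 1)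
    (hrev : ∀ x ∈ D, f x * G x < F x * g x)
    (hhaz : ∀ x ∈ D, f x * (1 - G x) < (1 - F x) * g x) :
    StrictMonoOn (fun x => reportGain p (F x) (G x)) D := by
  have hderiv : ∀ x ∈ D, HasDerivAt (fun y => reportGain p (F y) (G y))
      ((1 - p) * (-f x * (1 - G x) - (1 - F x) * -g x)
          / (p * (1 - F x) + (1 - p) * (1 - G x)) ^ 2
        - (1 - p) * (f x * G x - F x * g x) / (p * F x + (1 - p) * G x) ^ 2) x := by
    intro x hx
    obtain ⟨⟨hF0, hF1⟩, hG0, hG1⟩ := And.intro (hF01 x hx) (hG01 x hx)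
    exact (((hF x hx).const_sub 1).posteriorRatio ((hG x hx).const_sub 1) (by nlinarith)).sub
      ((hF x hx).posteriorRatio (hG x hx) (by nlinarith))
  refine strictMonoOn_of_hasDerivWithinAt_pos hD
    (fun x hx => (hderiv x hx).continuousAt.continuousWithinAt)
    (fun x hx => (hderiv x (interior_subset hx)).hasDerivWithinAt) fun x hx => ?_
  replace hx := interior_subset hx
  obtain ⟨⟨hF0, hF1⟩, hG0, hG1⟩ := And.intro (hF01 x hx) (hG01 x hx)
  have h₁ : 0 < (1 - p) * (-f x * (1 - G x) - (1 - F x) * -g x)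
      / (p * (1 - F x) + (1 - p) * (1 - G x)) ^ 2 :=
    div_pos (mul_pos (sub_pos.2 hp1) (by linarith [hhaz x hx])) (pow_pos (by nlinarith) 2)
  have h₀ : (1 - p) * (f x * G x - F x * g x) / (p * F x + (1 - p) * G x) ^ 2 < 0 :=
    div_neg_of_neg_of_pos (mul_neg_of_pos_of_neg (sub_pos.2 hp1) (by linarith [hrev x hx]))
      (pow_pos (by nlinarith) 2)
  linarith

end ReportGain

theorem strictMonoOn_mul_add_one_sub_mul {g₁ g₀ : ℝ → ℝ} {I : Set ℝ}
    (h₁ : StrictMonoOn g₁ I) (h₀ : StrictMonoOn g₀ I) (hI : I ⊆ Ioo 0 1)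
    (hg₁ : ∀ x ∈ I, 0 < g₁ x) (hg₀ : ∀ x ∈ I, g₀ x < 0) :
    StrictMonoOn (fun x => x * g₁ x + (1 - x) * g₀ x) I := by
  intro x hx y hy hxy
  have := h₁ hx hy hxy
  have := h₀ hx hy hxy
  have := hg₁ x hx
  have := hg₀ y hy
  have := (hI hx).1
  have := (hI hy).2
  nlinarith

theorem StrictMonoOn.root_trichotomy {f : ℝ → ℝ} {u v x c : ℝ} (hf : StrictMonoOn f (Ioo u v))
    (hx : x ∈ Ioo u v) (hfx : f x = 0) (hu : c ≤ u → f c < 0) (hv : v ≤ c → 0 < f c) :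
    (f c < 0 → c < x) ∧ (f c = 0 → c = x) ∧ (0 < f c → x < c) := by
  by_cases hcu : c ≤ u
  · have := hu hcu
    exact ⟨fun _ => hcu.trans_lt hx.1, fun h => by linarith, fun h => by linarith⟩
  by_cases hcv : v ≤ c
  · have := hv hcv
    exact ⟨fun h => by linarith, fun h => by linarith, fun _ => hx.2.trans_le hcv⟩
  have hc : c ∈ Ioo u v := ⟨not_le.1 hcu, not_le.1 hcv⟩
  exact ⟨fun h => (hf.lt_iff_lt hc hx).1 (hfx ▸ h), fun h => hf.injOn hc hx (h.trans hfx.symm),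
    fun h => (hf.lt_iff_lt hx hc).1 (hfx ▸ h)⟩

theorem setIntegral_pos_of_Ioo_subset {g : ℝ → ℝ} {s : Set ℝ} {u w : ℝ} (hg0 : ∀ x, 0 ≤ g x)
    (hg : IntegrableOn g s) (huw : u < w) (hsub : Ioo u w ⊆ s) (hpos : ∀ x ∈ Ioo u w, 0 < g x) :
    0 < ∫ x in s, g x := by
  rw [setIntegral_pos_iff_support_of_nonneg_ae (Filter.Eventually.of_forall hg0) hg]
  calc (0 : ENNReal) < volume (Ioo u w) := by simp [huw]
    _ ≤ volume (Function.support g ∩ s) := measure_mono fun x hx => ⟨(hpos x hx).ne', hsub hx⟩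

section Experiment

variable {f : ℝ → ℝ} {a : ℝ} {b : EReal}

theorem Fs_eq_integral (f : ℝ → ℝ) (s : Fin 2) (ℓ : ℝ) :
    Fs f s ℓ = ∫ u in (0:ℝ)..ℓ, fs f s u := by
  fin_cases s <;> rfl

theorem Fs_zero (f : ℝ → ℝ) (ℓ : ℝ) : Fs f 0 ℓ = F0 f ℓ := rfl

theorem Fs_one (f : ℝ → ℝ) (ℓ : ℝ) : Fs f 1 ℓ = F1 f ℓ := rfl

theorem continuous_fs (hf : Continuous f) (s : Fin 2) : Continuous (fs f s) := by
  fin_cases s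
  exacts [hf, continuous_id.mul hf]

theorem hasDerivAt_Fs (hf : Continuous f) (s : Fin 2) (x : ℝ) :
    HasDerivAt (Fs f s) (fs f s x) x := by
  rw [funext (Fs_eq_integral f s)]
  exact ((continuous_fs hf s).integral_hasStrictDerivAt 0 x).hasDerivAt

theorem sub_one_mul_eq_fs_sub_fs (f : ℝ → ℝ) :
    (fun x => (x - 1) * f x) = fun x => fs f 1 x - fs f 0 x := by
  funext x
  simp [fs, sub_mul]

namespace IsLRExperiment

theorem nonneg (hf : IsLRExperiment f a b) (x : ℝ) : 0 ≤ f x := by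
  have hdense : Dense ({a, b.toReal} : Set ℝ)ᶜ :=
    (Set.toFinite ({a, b.toReal} : Set ℝ)).countable.dense_compl ℝ
  have hsub : ({a, b.toReal} : Set ℝ)ᶜ ⊆ {x | 0 ≤ f x} := by
    intro x hx
    simp only [mem_compl_iff, mem_insert_iff, mem_singleton_iff, not_or] at hx
    rcases lt_or_gt_of_ne hx.1 with hxa | hax
    · exact (hf.zero_outside x (Or.inl hxa)).ge
    rcases lt_trichotomy (x : EReal) b with hxb | hxb | hbx
    · exact (hf.pos x hax hxb).le
    · exact absurd (by rw [← hxb, EReal.toReal_coe]) hx.2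
    · exact (hf.zero_outside x (Or.inr hbx)).ge
  exact (isClosed_le continuous_const hf.cont).closure_subset_iff.2 hsub
    (hdense.closure_eq ▸ mem_univ x)

theorem fs_nonneg (hf : IsLRExperiment f a b) (s : Fin 2) (x : ℝ) : 0 ≤ fs f s x := by
  fin_cases s
  · exact hf.nonneg x
  · show 0 ≤ x * f x
    rcases lt_or_ge x a with hxa | hax
    · simp [hf.zero_outside x (Or.inl hxa)]
    · exact mul_nonneg (hf.a_nonneg.trans hax) (hf.nonneg x)

theorem fs_pos (hf : IsLRExperiment f a b) (s : Fin 2) {x : ℝ} (hax : a < x)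
    (hxb : (x : EReal) < b) : 0 < fs f s x := by
  fin_cases s
  · exact hf.pos x hax hxb
  · exact mul_pos (hf.a_nonneg.trans_lt hax) (hf.pos x hax hxb)

theorem setIntegral_fs (hf : IsLRExperiment f a b) (s : Fin 2) :
    ∫ x in Ioi (0:ℝ), fs f s x = 1 := by
  fin_cases s
  exacts [hf.int_one, hf.int_mean]

theorem integrableOn_fs (hf : IsLRExperiment f a b) (s : Fin 2) :
    IntegrableOn (fs f s) (Ioi 0) := by
  by_contra h
  simpa [integral_undef h] using hf.setIntegral_fs s

theorem Fs_mem_Ioo (hf : IsLRExperiment f a b) (s : Fin 2) {ℓ : ℝ} (haℓ : a < ℓ)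
    (hℓb : (ℓ : EReal) < b) : Fs f s ℓ ∈ Ioo 0 1 := by
  have hℓ : 0 < ℓ := hf.a_nonneg.trans_lt haℓ
  obtain ⟨c, hℓc, hcb⟩ := EReal.lt_iff_exists_real_btwn.1 hℓb
  have hℓc : ℓ < c := EReal.coe_lt_coe_iff.1 hℓc
  have hint := hf.integrableOn_fs s
  have hsplit : (∫ x in Ioc 0 ℓ, fs f s x) + ∫ x in Ioi ℓ, fs f s x = 1 := by
    rw [← setIntegral_union (Ioc_disjoint_Ioi le_rfl) measurableSet_Ioi
      (hint.mono_set Ioc_subset_Ioi_self) (hint.mono_set (Ioi_subset_Ioi hℓ.le)),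
      Ioc_union_Ioi_eq_Ioi hℓ.le, hf.setIntegral_fs s]
  have hhead : 0 < ∫ x in Ioc 0 ℓ, fs f s x :=
    setIntegral_pos_of_Ioo_subset (hf.fs_nonneg s) (hint.mono_set Ioc_subset_Ioi_self) haℓ
      (fun x hx => ⟨hf.a_nonneg.trans_lt hx.1, hx.2.le⟩)
      fun x hx => hf.fs_pos s hx.1 ((EReal.coe_lt_coe_iff.2 hx.2).trans hℓb)
  have htail : 0 < ∫ x in Ioi ℓ, fs f s x :=
    setIntegral_pos_of_Ioo_subset (hf.fs_nonneg s) (hint.mono_set (Ioi_subset_Ioi hℓ.le)) hℓc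
      Ioo_subset_Ioi_self
      fun x hx => hf.fs_pos s (haℓ.trans hx.1) ((EReal.coe_lt_coe_iff.2 hx.2).trans hcb)
  rw [Fs_eq_integral, intervalIntegral.integral_of_le hℓ.le]
  exact ⟨hhead, by linarith⟩

theorem integrableOn_sub_one_mul (hf : IsLRExperiment f a b) :
    IntegrableOn (fun x => (x - 1) * f x) (Ioi 0) := by
  rw [sub_one_mul_eq_fs_sub_fs]
  exact (hf.integrableOn_fs 1).sub (hf.integrableOn_fs 0)

theorem setIntegral_sub_one_mul (hf : IsLRExperiment f a b) :
    ∫ x in Ioi (0:ℝ), (x - 1) * f x = 0 := by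
  rw [sub_one_mul_eq_fs_sub_fs, integral_sub (hf.integrableOn_fs 1) (hf.integrableOn_fs 0),
    hf.setIntegral_fs, hf.setIntegral_fs, sub_self]

/-- Both `f` and `ℓ f` have mass one, so `∫ (ℓ - 1) f = 0` and the support must straddle `1`. -/
theorem lt_one (hf : IsLRExperiment f a b) : a < 1 := by
  by_contra! h1a
  obtain ⟨c, hac, hcb⟩ := EReal.lt_iff_exists_real_btwn.1 hf.a_lt_b
  have hac : a < c := EReal.coe_lt_coe_iff.1 hac
  have hnonneg : ∀ x, 0 ≤ (x - 1) * f x := by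
    intro x
    rcases lt_or_ge x a with hxa | hax
    · simp [hf.zero_outside x (Or.inl hxa)]
    · exact mul_nonneg (by linarith) (hf.nonneg x)
  have := setIntegral_pos_of_Ioo_subset hnonneg hf.integrableOn_sub_one_mul hac
    (fun x hx => hf.a_nonneg.trans_lt hx.1) fun x hx =>
      mul_pos (by linarith [hx.1]) (hf.pos x hx.1 ((EReal.coe_lt_coe_iff.2 hx.2).trans hcb))
  linarith [hf.setIntegral_sub_one_mul]

theorem one_lt (hf : IsLRExperiment f a b) : (1 : EReal) < b := by
  by_contra! hb1
  obtain ⟨c, hac, hcb⟩ := EReal.lt_iff_exists_real_btwn.1 hf.a_lt_b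
  have hac : a < c := EReal.coe_lt_coe_iff.1 hac
  have hc1 : c < 1 := EReal.coe_lt_coe_iff.1 (hcb.trans_le hb1)
  have hnonneg : ∀ x, 0 ≤ -((x - 1) * f x) := by
    intro x
    rcases le_or_gt x 1 with hx1 | hx1
    · nlinarith [hf.nonneg x]
    · simp [hf.zero_outside x (Or.inr (hb1.trans_lt (EReal.coe_lt_coe_iff.2 hx1)))]
  have := setIntegral_pos_of_Ioo_subset hnonneg hf.integrableOn_sub_one_mul.neg hac
    (fun x hx => hf.a_nonneg.trans_lt hx.1) fun x hx =>
      neg_pos.2 (mul_neg_of_neg_of_pos (by linarith [hx.2])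
        (hf.pos x hx.1 ((EReal.coe_lt_coe_iff.2 hx.2).trans hcb)))
  rw [integral_neg, hf.setIntegral_sub_one_mul, neg_zero] at this
  exact this.false

end IsLRExperiment

end Experiment

section Beliefs

variable {μ u β : ℝ}

theorem strictMonoOn_zOf (hμ : μ ∈ Ioo 0 1) : StrictMonoOn (zOf μ) (Iio 1) := by
  intro x hx y hy hxy
  have hx1 : 0 < 1 - x := sub_pos.2 hx
  have hy1 : 0 < 1 - y := sub_pos.2 hy
  have hμ' : 0 < μ * (1 - μ) := mul_pos hμ.1 (sub_pos.2 hμ.2)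
  unfold zOf
  rw [div_lt_div_iff₀ (mul_pos hμ.1 hx1) (mul_pos hμ.1 hy1)]
  nlinarith [mul_pos hμ' (sub_pos.2 hxy)]

theorem betaOf_lt_one (hμ : μ ∈ Ioo 0 1) (hu : 0 ≤ u) : betaOf μ u < 1 := by
  unfold betaOf
  rw [div_lt_one (by nlinarith [hμ.1, hμ.2])]
  linarith [hμ.2]

theorem betaOf_nonneg (hμ : μ ∈ Ioo 0 1) (hu : 0 ≤ u) : 0 ≤ betaOf μ u :=
  div_nonneg (mul_nonneg hμ.1.le hu) (by nlinarith [hμ.1, hμ.2])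

theorem zOf_self (hμ : μ ∈ Ioo 0 1) : zOf μ μ = 1 := by
  unfold zOf
  rw [mul_comm]
  exact div_self (mul_pos hμ.1 (sub_pos.2 hμ.2)).ne'

theorem lt_zOf_iff (hμ : μ ∈ Ioo 0 1) (hu : 0 ≤ u) (hβ : β < 1) :
    u < zOf μ β ↔ betaOf μ u < β := by
  unfold zOf betaOf
  rw [lt_div_iff₀ (mul_pos hμ.1 (sub_pos.2 hβ)), div_lt_iff₀ (by nlinarith [hμ.1, hμ.2])]
  constructor <;> intro h <;> linarith

theorem zOf_lt_iff (hμ : μ ∈ Ioo 0 1) (hu : 0 ≤ u) (hβ : β < 1) :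
    zOf μ β < u ↔ β < betaOf μ u := by
  unfold zOf betaOf
  rw [div_lt_iff₀ (mul_pos hμ.1 (sub_pos.2 hβ)), lt_div_iff₀ (by nlinarith [hμ.1, hμ.2])]
  constructor <;> intro h <;> linarith

theorem zOf_mem_Ioo {v : ℝ} (hμ : μ ∈ Ioo 0 1) (hu : 0 ≤ u) (hv : 0 ≤ v)
    (hβ : β ∈ Ioo (betaOf μ u) (betaOf μ v)) : β < 1 ∧ zOf μ β ∈ Ioo u v := by
  have hβ1 : β < 1 := hβ.2.trans (betaOf_lt_one hμ hv)
  exact ⟨hβ1, (lt_zOf_iff hμ hu hβ1).2 hβ.1, (zOf_lt_iff hμ hv hβ1).2 hβ.2⟩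

end Beliefs

namespace IsLRExperiment

variable {f : ℝ → ℝ} {a b μ : ℝ}

theorem zOf_mem_Ioo (hf : IsLRExperiment f a b) (hμ : μ ∈ Ioo 0 1) {β : ℝ}
    (hβ : β ∈ Ioo (betaOf μ a) (betaOf μ b)) : β < 1 ∧ zOf μ β ∈ Ioo a b :=
  _root_.zOf_mem_Ioo hμ hf.a_nonneg (hf.a_nonneg.trans (EReal.coe_lt_coe_iff.1 hf.a_lt_b).le) hβ

theorem Ioo_betaOf_subset (hf : IsLRExperiment f a b) (hμ : μ ∈ Ioo 0 1) :
    Ioo (betaOf μ a) (betaOf μ b) ⊆ Ioo 0 1 :=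
  fun _ hβ => ⟨(betaOf_nonneg hμ hf.a_nonneg).trans_lt hβ.1, (hf.zOf_mem_Ioo hμ hβ).1⟩

theorem mem_Ioo_betaOf (hf : IsLRExperiment f a b) (hμ : μ ∈ Ioo 0 1) :
    μ ∈ Ioo (betaOf μ a) (betaOf μ b) := by
  have hb : 0 ≤ b := hf.a_nonneg.trans (EReal.coe_lt_coe_iff.1 hf.a_lt_b).le
  rw [mem_Ioo, ← lt_zOf_iff hμ hf.a_nonneg hμ.2, ← zOf_lt_iff hμ hb hμ.2, zOf_self hμ]
  exact ⟨hf.lt_one, EReal.coe_lt_coe_iff.1 hf.one_lt⟩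

end IsLRExperiment

section Crossing

variable {fh fl : ℝ → ℝ} {a_h a_l b_l : ℝ} {b_h : EReal} {μ p : ℝ}

theorem Noisier.strictMonoOn_reportGain (hdom : Noisier fh fl a_l b_l)
    (hh : IsLRExperiment fh a_h b_h) (hl : IsLRExperiment fl a_l b_l) (hab : a_h < a_l)
    (hbb : (b_l : EReal) < b_h) (hp : 0 ≤ p) (hp1 : p < 1) (s : Fin 2) :
    StrictMonoOn (fun ℓ => reportGain p (Fs fh s ℓ) (Fs fl s ℓ)) (Ioo a_l b_l) := by
  have hFh : ∀ ℓ ∈ Ioo a_l b_l, Fs fh s ℓ ∈ Ioo 0 1 := fun ℓ hℓ =>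
    hh.Fs_mem_Ioo s (hab.trans hℓ.1) ((EReal.coe_lt_coe_iff.2 hℓ.2).trans hbb)
  have hFl : ∀ ℓ ∈ Ioo a_l b_l, Fs fl s ℓ ∈ Ioo 0 1 := fun ℓ hℓ =>
    hl.Fs_mem_Ioo s hℓ.1 (EReal.coe_lt_coe_iff.2 hℓ.2)
  refine _root_.strictMonoOn_reportGain (convex_Ioo a_l b_l) hp hp1
    (fun ℓ _ => hasDerivAt_Fs hh.cont s ℓ) (fun ℓ _ => hasDerivAt_Fs hl.cont s ℓ) hFh hFl
    (fun ℓ hℓ => ?_) fun ℓ hℓ => ?_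
  · have := (hdom s ℓ hℓ.1 hℓ.2).1
    rwa [gt_iff_lt, div_lt_div_iff₀ (hFh ℓ hℓ).1 (hFl ℓ hℓ).1, mul_comm (fs fl s ℓ)] at this
  · have := (hdom s ℓ hℓ.1 hℓ.2).2
    rwa [gt_iff_lt, div_lt_div_iff₀ (sub_pos.2 (hFh ℓ hℓ).2) (sub_pos.2 (hFl ℓ hℓ).2),
      mul_comm (fs fl s ℓ)] at this

theorem Noisier.strictMonoOn_reportGain_H (hdom : Noisier fh fl a_l b_l)
    (hh : IsLRExperiment fh a_h b_h) (hl : IsLRExperiment fl a_l b_l) (hab : a_h < a_l)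
    (hbb : (b_l : EReal) < b_h) (hμ : μ ∈ Ioo 0 1) (hp : 0 ≤ p) (hp1 : p < 1) (s : Fin 2) :
    StrictMonoOn (fun β => reportGain p (H fh μ s β) (H fl μ s β))
      (Ioo (betaOf μ a_l) (betaOf μ b_l)) :=
  (hdom.strictMonoOn_reportGain hh hl hab hbb hp hp1 s).comp
    ((strictMonoOn_zOf hμ).mono fun _ hβ => (hl.zOf_mem_Ioo hμ hβ).1)
    fun _ hβ => (hl.zOf_mem_Ioo hμ hβ).2

theorem IsCrossingBelief.reportGain_sign {s : Fin 2} {βd β : ℝ}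
    (hc : IsCrossingBelief fh fl a_h a_l b_l b_h μ s βd)
    (hh : IsLRExperiment fh a_h b_h) (hl : IsLRExperiment fl a_l b_l) (hab : a_h < a_l)
    (hbb : (b_l : EReal) < b_h) (hμ : μ ∈ Ioo 0 1) (hp : 0 ≤ p) (hp1 : p < 1)
    (hβ : β ∈ Ioo (betaOf μ a_l) (betaOf μ b_l)) :
    (0 < reportGain p (H fh μ s β) (H fl μ s β) ↔ βd < β) ∧
      (reportGain p (H fh μ s β) (H fl μ s β) < 0 ↔ β < βd) := by
  obtain ⟨hβ1, hzl, hzr⟩ := hl.zOf_mem_Ioo hμ hβ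
  have hzh : ((zOf μ β : ℝ) : EReal) < b_h := (EReal.coe_lt_coe_iff.2 hzr).trans hbb
  have hA : H fh μ s β ∈ Ioo 0 1 := hh.Fs_mem_Ioo s (hab.trans hzl) hzh
  have hB : H fl μ s β ∈ Ioo 0 1 := hl.Fs_mem_Ioo s hzl (EReal.coe_lt_coe_iff.2 hzr)
  obtain ⟨hlt, heq, hgt⟩ :=
    hc.2 β ((lt_zOf_iff hμ hh.a_nonneg hβ1).1 (hab.trans hzl)) hβ1 hzh
  rw [reportGain_pos_iff hp hp1 hA hB, reportGain_neg_iff hp hp1 hA hB]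
  rcases lt_trichotomy β βd with h | rfl | h
  · have := hlt h
    exact ⟨iff_of_false (by linarith) (by linarith), iff_of_true (by linarith) h⟩
  · have := heq rfl
    exact ⟨iff_of_false (by linarith) (lt_irrefl _), iff_of_false (by linarith) (lt_irrefl _)⟩
  · have := hgt h
    exact ⟨iff_of_true (by linarith) h, iff_of_false (by linarith) (by linarith)⟩

end Crossing

theorem indiffLHS_sub_indiffRHS (fh fl : ℝ → ℝ) (μ p β : ℝ) :
    indiffLHS fh fl μ p β - indiffRHS fh fl μ p β =
      β * reportGain p (H fh μ 1 β) (H fl μ 1 β)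
        + (1 - β) * reportGain p (H fh μ 0 β) (H fl μ 0 β) := by
  unfold indiffLHS indiffRHS reportGain posteriorRatio
  ring

theorem indiffLHS_sub_indiffRHS_half (fh fl : ℝ → ℝ) (p : ℝ) :
    indiffLHS fh fl (1/2) p (1/2) - indiffRHS fh fl (1/2) p (1/2)
      = (Grep1 fh fl p - Grep0 fh fl p) / 2 := by
  have h : ∀ f s, H f (1/2) s (1/2) = Fs f s 1 := fun f s =>
    congrArg (Fs f s) (zOf_self (by norm_num))
  unfold indiffLHS indiffRHS Grep1 Grep0
  simp only [h, Fs_zero, Fs_one]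
  ring

section Indifference

variable {fh fl : ℝ → ℝ} {a_h a_l b_l : ℝ} {b_h : EReal} {μ p βd0 βd1 β : ℝ}

theorem strictMonoOn_indiffLHS_sub_indiffRHS (hh : IsLRExperiment fh a_h b_h)
    (hl : IsLRExperiment fl a_l b_l) (hab : a_h < a_l) (hbb : (b_l : EReal) < b_h)
    (hdom : Noisier fh fl a_l b_l) (hμ : μ ∈ Ioo 0 1) (hp : 0 ≤ p) (hp1 : p < 1)
    (hc0 : IsCrossingBelief fh fl a_h a_l b_l b_h μ 0 βd0)
    (hc1 : IsCrossingBelief fh fl a_h a_l b_l b_h μ 1 βd1) :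
    StrictMonoOn (fun β => indiffLHS fh fl μ p β - indiffRHS fh fl μ p β) (Ioo βd1 βd0) := by
  have hI : Ioo βd1 βd0 ⊆ Ioo (betaOf μ a_l) (betaOf μ b_l) :=
    Ioo_subset_Ioo hc1.1.1.le hc0.1.2.le
  simp only [indiffLHS_sub_indiffRHS]
  exact strictMonoOn_mul_add_one_sub_mul
    ((hdom.strictMonoOn_reportGain_H hh hl hab hbb hμ hp hp1 1).mono hI)
    ((hdom.strictMonoOn_reportGain_H hh hl hab hbb hμ hp hp1 0).mono hI)
    (hI.trans (hl.Ioo_betaOf_subset hμ))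
    (fun β hβ => (hc1.reportGain_sign hh hl hab hbb hμ hp hp1 (hI hβ)).1.2 hβ.1)
    fun β hβ => (hc0.reportGain_sign hh hl hab hbb hμ hp hp1 (hI hβ)).2.2 hβ.2

theorem indiffLHS_sub_indiffRHS_neg (hh : IsLRExperiment fh a_h b_h)
    (hl : IsLRExperiment fl a_l b_l) (hab : a_h < a_l) (hbb : (b_l : EReal) < b_h)
    (hμ : μ ∈ Ioo 0 1) (hp : 0 ≤ p) (hp1 : p < 1)
    (hc0 : IsCrossingBelief fh fl a_h a_l b_l b_h μ 0 βd0)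
    (hc1 : IsCrossingBelief fh fl a_h a_l b_l b_h μ 1 βd1) (hd : βd1 < βd0)
    (hβ : β ∈ Ioo (betaOf μ a_l) (betaOf μ b_l)) (hβd : β ≤ βd1) :
    indiffLHS fh fl μ p β - indiffRHS fh fl μ p β < 0 := by
  have h₁ := mt (hc1.reportGain_sign hh hl hab hbb hμ hp hp1 hβ).1.1 (not_lt.2 hβd)
  have h₀ := (hc0.reportGain_sign hh hl hab hbb hμ hp hp1 hβ).2.2 (hβd.trans_lt hd)
  obtain ⟨hβ0, hβ1⟩ := hl.Ioo_betaOf_subset hμ hβ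
  rw [indiffLHS_sub_indiffRHS]
  exact add_neg_of_nonpos_of_neg (mul_nonpos_of_nonneg_of_nonpos hβ0.le (not_lt.1 h₁))
    (mul_neg_of_pos_of_neg (sub_pos.2 hβ1) h₀)

theorem indiffLHS_sub_indiffRHS_pos (hh : IsLRExperiment fh a_h b_h)
    (hl : IsLRExperiment fl a_l b_l) (hab : a_h < a_l) (hbb : (b_l : EReal) < b_h)
    (hμ : μ ∈ Ioo 0 1) (hp : 0 ≤ p) (hp1 : p < 1)
    (hc0 : IsCrossingBelief fh fl a_h a_l b_l b_h μ 0 βd0)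
    (hc1 : IsCrossingBelief fh fl a_h a_l b_l b_h μ 1 βd1) (hd : βd1 < βd0)
    (hβ : β ∈ Ioo (betaOf μ a_l) (betaOf μ b_l)) (hβd : βd0 ≤ β) :
    0 < indiffLHS fh fl μ p β - indiffRHS fh fl μ p β := by
  have h₁ := (hc1.reportGain_sign hh hl hab hbb hμ hp hp1 hβ).1.2 (hd.trans_le hβd)
  have h₀ := mt (hc0.reportGain_sign hh hl hab hbb hμ hp hp1 hβ).2.1 (not_lt.2 hβd)
  obtain ⟨hβ0, hβ1⟩ := hl.Ioo_betaOf_subset hμ hβ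
  rw [indiffLHS_sub_indiffRHS]
  exact add_pos_of_pos_of_nonneg (mul_pos hβ0 h₁)
    (mul_nonneg (sub_pos.2 hβ1).le (not_lt.1 h₀))

end Indifference

theorem stmt_6_general (fh fl : ℝ → ℝ) (a_h a_l b_l : ℝ) (b_h : EReal)
    (hh : IsLRExperiment fh a_h b_h) (hl : IsLRExperiment fl a_l (b_l : EReal))
    (hab : a_h < a_l) (hbb : (b_l : EReal) < b_h)
    (hdom : Noisier fh fl a_l b_l)
    (p : ℝ) (hp : p ∈ Set.Ioo (0:ℝ) 1)
    (βd0 βd1 : ℝ)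
    (hc0 : IsCrossingBelief fh fl a_h a_l b_l b_h (1/2) 0 βd0)
    (hc1 : IsCrossingBelief fh fl a_h a_l b_l b_h (1/2) 1 βd1)
    (βstar : ℝ) (hβ : βstar ∈ Set.Ioo βd1 βd0)
    (heq : indiffLHS fh fl (1/2) p βstar = indiffRHS fh fl (1/2) p βstar) :
    (Grep1 fh fl p < Grep0 fh fl p → βstar > 1/2) ∧
    (Grep1 fh fl p = Grep0 fh fl p → βstar = 1/2) ∧
    (Grep0 fh fl p < Grep1 fh fl p → βstar < 1/2) := by
  obtain ⟨hp0, hp1⟩ := hp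
  have hμ : (1/2 : ℝ) ∈ Ioo 0 1 := by norm_num
  have hd : βd1 < βd0 := hβ.1.trans hβ.2
  have hhalf := hl.mem_Ioo_betaOf hμ
  have key := (strictMonoOn_indiffLHS_sub_indiffRHS hh hl hab hbb hdom hμ hp0.le hp1 hc0 hc1)
    |>.root_trichotomy hβ (sub_eq_zero.2 heq)
      (indiffLHS_sub_indiffRHS_neg hh hl hab hbb hμ hp0.le hp1 hc0 hc1 hd hhalf)
      (indiffLHS_sub_indiffRHS_pos hh hl hab hbb hμ hp0.le hp1 hc0 hc1 hd hhalf)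
  rw [indiffLHS_sub_indiffRHS_half] at key
  exact ⟨fun h => key.1 (by linarith), fun h => (key.2.1 (by linarith)).symm,
    fun h => key.2.2 (by linarith)⟩

/-- At prior `μ = 1/2`, the unique solution `β*` of the indifference equation lies above,
at, or below `1/2` according as `G₁ < G₀`, `G₁ = G₀`, or `G₁ > G₀`. -/
theorem stmt_6 (fh fl : ℝ → ℝ) (a_h a_l b_l : ℝ) (b_h : EReal)
    (hh : IsLRExperiment fh a_h b_h) (hl : IsLRExperiment fl a_l (b_l : EReal))
    (hab : a_h < a_l) (hbb : (b_l : EReal) < b_h)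
    (hdom : Noisier fh fl a_l b_l)
    (p : ℝ) (hp : p ∈ Set.Ioo (0:ℝ) 1)
    (βd0 βd1 : ℝ)
    (hc0 : IsCrossingBelief fh fl a_h a_l b_l b_h (1/2) 0 βd0)
    (hc1 : IsCrossingBelief fh fl a_h a_l b_l b_h (1/2) 1 βd1)
    (hlt : βd1 < βd0)
    (βstar : ℝ) (hβ : βstar ∈ Set.Ioo βd1 βd0)
    (heq : indiffLHS fh fl (1/2) p βstar = indiffRHS fh fl (1/2) p βstar) :
    (Grep1 fh fl p < Grep0 fh fl p → βstar > 1/2) ∧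
    (Grep1 fh fl p = Grep0 fh fl p → βstar = 1/2) ∧
    (Grep0 fh fl p < Grep1 fh fl p → βstar < 1/2) :=
  stmt_6_general fh fl a_h a_l b_l b_h hh hl hab hbb hdom p hp βd0 βd1 hc0 hc1 βstar hβ heq
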